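/- arXiv:0808.2725 — 7 statements merged into one kernel-verified Lean document; each statement's English description precedes it below -/
import Mathlib

section
/- Let I = I_1 × ... × I_m be a finite product of finite sets, each of size at least 2. For a subset D of [m], let L_D ⊂ Q^I be the subspace of functions x : I → Q depending only on the coordinates in D. Then the set-wise stabilizer of L_D in the symmetric group on I equals the wreath product S_{I_{D^C}} wr S_{I_D}, i.e. the set of permutations g of I such that the D-components (g(i))_D of g(i) depend only on i_D. -/
/-! `L_D` consists of the functions constant on the classes of the relation "agree on `D`".
Precomposition with `g` preserves such functions iff `g` maps classes into classes (test on
the indicator of a class). On a finite set a permutation doing so permutes the classes, so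
`g⁻¹` maps classes into classes as well, which gives the reverse inclusion. -/

open Finset

namespace Hier

variable {m : ℕ}

abbrev Cell (I : Fin m → ℕ) := ∀ j, Fin (I j)

variable (I : Fin m → ℕ)

/-- standard inner product on ℚ^I -/
def dot (x y : Cell I → ℚ) : ℚ := ∑ i, x i * y i

/-- L_E: tables depending only on the coordinates in E -/
def LL (E : Finset (Fin m)) : Submodule ℚ (Cell I → ℚ) where
  carrier := {x | ∀ i i' : Cell I, (∀ j ∈ E, i j = i' j) → x i = x i'}
  zero_mem' := by intro i i' _; rfl
  add_mem' := by
    intro a b ha hb i i' h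
    simp only [Pi.add_apply, ha i i' h, hb i i' h]
  smul_mem' := by
    intro c a ha i i' h
    simp only [Pi.smul_apply, ha i i' h]

/-- orthogonal complement w.r.t. the standard inner product -/
def perp (S : Submodule ℚ (Cell I → ℚ)) : Submodule ℚ (Cell I → ℚ) where
  carrier := {y | ∀ x ∈ S, dot I x y = 0}
  zero_mem' := by intro x hx; simp [dot]
  add_mem' := by
    intro a b ha hb x hx
    have h1 := ha x hx
    have h2 := hb x hx
    simp only [dot, Pi.add_apply, mul_add, Finset.sum_add_distrib] at *
    rw [h1, h2]; ring
  smul_mem' := by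
    intro c a ha x hx
    have h1 := ha x hx
    simp only [dot, Pi.smul_apply, smul_eq_mul] at *
    calc ∑ i, x i * (c * a i) = c * ∑ i, x i * a i := by
          rw [Finset.mul_sum]; congr 1; funext i; ring
      _ = 0 := by rw [h1]; ring

/-- incremental subspace N_E -/
def NN (E : Finset (Fin m)) : Submodule ℚ (Cell I → ℚ) :=
  LL I E ⊓ perp I (⨆ j ∈ E, LL I (E.erase j))

/-- F-marginal of x evaluated at the marginal cell i_F -/
def marg (x : Cell I → ℚ) (F : Finset (Fin m)) (i : Cell I) : ℚ :=
  ∑ j : Cell I, if ∀ k ∈ F, j k = i k then x j else 0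

/-- kernel of the configuration determined by a family of facets:
tables all of whose F-marginals vanish, F ∈ Fs -/
def kern (Fs : Finset (Finset (Fin m))) : Submodule ℚ (Cell I → ℚ) where
  carrier := {y | ∀ F ∈ Fs, ∀ i, marg I y F i = 0}
  zero_mem' := by intro F hF i; simp [marg]
  add_mem' := by
    intro a b ha hb F hF i
    have h1 := ha F hF i
    have h2 := hb F hF i
    simp only [marg, Pi.add_apply] at *
    have key : (∑ j : Cell I, if ∀ k ∈ F, j k = i k then a j + b j else 0)
        = (∑ j : Cell I, if ∀ k ∈ F, j k = i k then a j else 0)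
          + (∑ j : Cell I, if ∀ k ∈ F, j k = i k then b j else 0) := by
      rw [← Finset.sum_add_distrib]
      apply Finset.sum_congr rfl
      intro j _
      split <;> simp
    rw [key, h1, h2]; ring
  smul_mem' := by
    intro c a ha F hF i
    have h1 := ha F hF i
    simp only [marg, Pi.smul_apply, smul_eq_mul] at *
    calc ∑ j : Cell I, (if ∀ k ∈ F, j k = i k then c * a j else 0)
        = c * ∑ j : Cell I, (if ∀ k ∈ F, j k = i k then a j else 0) := by
          rw [Finset.mul_sum]; congr 1; funext j; split <;> simp
      _ = 0 := by rw [h1]; ring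

/-- a (finite) abstract simplicial complex on [m] -/
def IsComplex (Δ : Finset (Finset (Fin m))) : Prop :=
  ∀ F ∈ Δ, ∀ F' ⊆ F, F' ∈ Δ

/-- the maximal elements (facets) of Δ -/
def facets (Δ : Finset (Finset (Fin m))) : Finset (Finset (Fin m)) :=
  Δ.filter (fun D => ∀ F ∈ Δ, D ⊆ F → F = D)

/-- row space of the hierarchical-model configuration A_Δ -/
def rowsp (Δ : Finset (Finset (Fin m))) : Submodule ℚ (Cell I → ℚ) :=
  ⨆ D ∈ facets Δ, LL I D

/-- single partial difference operator ∂_j -/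
def pd1 (hI : ∀ j, 0 < I j) (j : Fin m) (x : Cell I → ℚ) : Cell I → ℚ :=
  fun i => x i - x (Function.update i j ⟨0, hI j⟩)

/-- ∂_E: composition of the (commuting) ∂_j, j ∈ E -/
noncomputable def pdE (hI : ∀ j, 0 < I j) (E : Finset (Fin m)) : (Cell I → ℚ) → (Cell I → ℚ) :=
  E.toList.foldr (fun j f => pd1 I hI j ∘ f) id

section ConstOnClasses

variable {α K : Type*}

def constOnClasses (s : Setoid α) (K : Type*) : Set (α → K) :=
  {x | ∀ a b, s a b → x a = x b}

open Classical in
theorem comp_mem_constOnClasses_iff [Zero K] [One K] [NeZero (1 : K)] (s : Setoid α)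
    (g : α → α) :
    (∀ x ∈ constOnClasses s K, x ∘ g ∈ constOnClasses s K) ↔ ∀ a b, s a b → s (g a) (g b) := by
  refine ⟨fun hg a b hab => ?_, fun hg x hx a b hab => hx _ _ (hg a b hab)⟩
  -- test against the indicator of the class of `g a`
  let x : α → K := fun c => if s (g a) c then 1 else 0
  have hx : x ∈ constOnClasses s K := fun c c' hcc' => by
    have hclass : s (g a) c ↔ s (g a) c' :=
      ⟨fun h => s.trans' h hcc', fun h => s.trans' h (s.symm' hcc')⟩
    simp only [x, hclass]
  have := hg x hx a b hab
  simp only [x, Function.comp_apply, s.refl', if_true] at this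
  by_contra hne
  exact one_ne_zero (this.trans (if_neg hne))

/-- The map induced by `g` on the finite quotient is surjective, hence injective. -/
theorem rel_symm_apply_of_finite [Finite α] {s : Setoid α} {g : Equiv.Perm α}
    (hg : ∀ a b, s a b → s (g a) (g b)) {a b : α} (hab : s a b) : s (g.symm a) (g.symm b) := by
  let q : Quotient s → Quotient s := Quotient.map (sa := s) (sb := s) g fun a b => hg a b
  have hq : ∀ c, q (Quotient.mk s (g.symm c)) = Quotient.mk s c := fun c => by
    simp only [q, Quotient.map_mk, Equiv.apply_symm_apply]
  have hsurj : Function.Surjective q := Quotient.ind fun c => ⟨_, hq c⟩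
  refine Quotient.exact (Finite.injective_iff_surjective.mpr hsurj ?_)
  rw [hq, hq]
  exact Quotient.sound hab

theorem image_comp_symm_constOnClasses_eq_iff [Finite α] [Zero K] [One K] [NeZero (1 : K)]
    (s : Setoid α) (g : Equiv.Perm α) :
    (fun x : α → K => x ∘ g.symm) '' constOnClasses s K = constOnClasses s K ↔
      ∀ a b, s a b → s (g a) (g b) := by
  rw [← comp_mem_constOnClasses_iff (K := K) s g]
  constructor
  · rintro himage x hx
    obtain ⟨z, hz, rfl⟩ := himage.symm ▸ hx
    simpa [Function.comp_assoc] using hz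
  · intro hg
    have hrel := (comp_mem_constOnClasses_iff s g).mp hg
    ext x
    constructor
    · rintro ⟨z, hz, rfl⟩ a b hab
      exact hz _ _ (rel_symm_apply_of_finite hrel hab)
    · exact fun hx => ⟨x ∘ g, hg x hx, by ext; simp⟩

end ConstOnClasses

def agreeOn (D : Finset (Fin m)) : Setoid (Cell I) :=
  Setoid.ker fun i (j : D) => i j

variable {I} in
theorem agreeOn_iff {D : Finset (Fin m)} {i i' : Cell I} :
    agreeOn I D i i' ↔ ∀ j ∈ D, i j = i' j := by
  exact Setoid.ker_def.trans (funext_iff.trans Subtype.forall)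

theorem coe_LL_eq_constOnClasses (D : Finset (Fin m)) :
    (LL I D : Set (Cell I → ℚ)) = constOnClasses (agreeOn I D) ℚ := by
  ext x
  exact forall₂_congr fun i i' => imp_congr agreeOn_iff.symm Iff.rfl

theorem stmt3 (D : Finset (Fin m)) (g : Equiv.Perm (Cell I)) :
    ((fun x : Cell I → ℚ => x ∘ ⇑g.symm) '' (LL I D : Set (Cell I → ℚ))
        = (LL I D : Set (Cell I → ℚ)))
    ↔ (∀ i i' : Cell I, (∀ j ∈ D, i j = i' j) → ∀ j ∈ D, g i j = g i' j) := by
  rw [coe_LL_eq_constOnClasses]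
  simpa only [agreeOn_iff] using image_comp_symm_constOnClasses_eq_iff (agreeOn I D) g

end Hier
end

section
/- Let I = I_1 × ... × I_m and for E ⊂ [m] let L_E ⊂ Q^I be the subspace of tables depending only on coordinates in E, and define the incremental subspace N_E = L_E ∩ (Σ_{j∈E} L_{E∖{j}})^⊥ for E nonempty and N_∅ = L_∅. Then N_E = L_E ∩ (Σ_{j∈E} L_{[m]∖{j}})^⊥. -/
/-!
Inclusion `⊇` holds because `L_{E∖j} ⊆ L_{[m]∖j}`. For `⊆`, let `x ∈ L_E` be orthogonal to every
`L_{E∖j}` and let `z` not depend on coordinate `j`. The `E`-marginal of `z` does not depend on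
coordinate `j` either, so it lies in `L_{E∖j}`; and since `x` is constant on the fibres of the
projection to the `E`-coordinates, pairing the marginal with `x` just multiplies `⟨z, x⟩` by the
common fibre size `∏_{k ∉ E} I_k`. Hence `⟨z, x⟩ = 0` (trivially so when there are no cells).
-/

open Finset

namespace Hier

variable {m : ℕ}

variable (I : Fin m → ℕ)

variable {I}

lemma mem_perp_iff_le_ker {S : Submodule ℚ (Cell I → ℚ)} {x : Cell I → ℚ} :
    x ∈ perp I S ↔ S ≤ LinearMap.ker ((dotProductBilin ℚ ℚ).flip x) :=
  Iff.rfl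

lemma mem_perp_iSup₂ {ι : Type*} {p : ι → Prop} {S : ∀ i, p i → Submodule ℚ (Cell I → ℚ)}
    {x : Cell I → ℚ} : x ∈ perp I (⨆ (i) (h : p i), S i h) ↔ ∀ i h, x ∈ perp I (S i h) := by
  simp only [mem_perp_iff_le_ker, iSup₂_le_iff]

lemma perp_anti {S T : Submodule ℚ (Cell I → ℚ)} (h : S ≤ T) : perp I T ≤ perp I S :=
  fun _ hy x hx => hy x (h hx)

lemma LL_mono {E F : Finset (Fin m)} (h : E ⊆ F) : LL I E ≤ LL I F :=
  fun _ hx i i' hagree => hx i i' fun k hk => hagree k (h hk)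

lemma card_filter_agree (E : Finset (Fin m)) (c : Cell I) :
    #{i : Cell I | ∀ k ∈ E, c k = i k} = ∏ k ∈ Eᶜ, I k := by
  have : ({i : Cell I | ∀ k ∈ E, c k = i k} : Finset (Cell I)) =
      Fintype.piFinset fun k => if k ∈ E then {c k} else univ := by
    ext i
    simp only [mem_filter, mem_univ, true_and, Fintype.mem_piFinset]
    refine forall_congr' fun k => ?_
    split_ifs <;> simp [*, eq_comm]
  rw [this, Fintype.card_piFinset, ← univ_inter Eᶜ, ← prod_ite_mem]
  refine prod_congr rfl fun k _ => ?_
  split_ifs <;> simp_all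

lemma marg_mem_LL_inter {E G : Finset (Fin m)} {z : Cell I → ℚ} (hz : z ∈ LL I G) :
    marg I z E ∈ LL I (E ∩ G) := by
  intro i i' hagree
  simp only [marg, ← sum_filter]
  refine sum_nbij' (fun w => E.piecewise i' w) (fun w => E.piecewise i w) ?_ ?_ ?_ ?_ ?_ <;>
    simp only [mem_filter, mem_univ, true_and]
  · exact fun w _ k hk => piecewise_eq_of_mem _ _ _ hk
  · exact fun w _ k hk => piecewise_eq_of_mem _ _ _ hk
  · intro w hw
    ext1 k
    by_cases hk : k ∈ E <;> simp [hk, hw]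
  · intro w hw
    ext1 k
    by_cases hk : k ∈ E <;> simp [hk, hw]
  · intro w hw
    refine hz _ _ fun k hkG => ?_
    by_cases hkE : k ∈ E
    · rw [piecewise_eq_of_mem _ _ _ hkE, hw k hkE]
      exact hagree k (mem_inter.2 ⟨hkE, hkG⟩)
    · rw [piecewise_eq_of_notMem _ _ _ hkE]

lemma dot_marg_of_mem_LL {E : Finset (Fin m)} (z : Cell I → ℚ) {x : Cell I → ℚ}
    (hx : x ∈ LL I E) :
    dot I (marg I z E) x = (∏ k ∈ Eᶜ, I k : ℕ) * dot I z x := by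
  calc dot I (marg I z E) x
      = ∑ i : Cell I, ∑ w : Cell I, if ∀ k ∈ E, w k = i k then z w * x w else 0 := by
        refine sum_congr rfl fun i _ => ?_
        rw [marg, sum_mul]
        refine sum_congr rfl fun w _ => ?_
        split_ifs with h
        · rw [hx i w fun k hk => (h k hk).symm]
        · rw [zero_mul]
    _ = ∑ w : Cell I, (#{i : Cell I | ∀ k ∈ E, w k = i k} : ℚ) * (z w * x w) := by
        rw [sum_comm]
        refine sum_congr rfl fun w _ => ?_
        rw [← sum_filter, sum_const, nsmul_eq_mul]
    _ = (∏ k ∈ Eᶜ, I k : ℕ) * dot I z x := by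
        simp only [card_filter_agree, dot, mul_sum]

lemma mem_perp_LL_univ_erase {E : Finset (Fin m)} {j : Fin m} {x : Cell I → ℚ}
    (hx : x ∈ LL I E) (hperp : x ∈ perp I (LL I (E.erase j))) :
    x ∈ perp I (LL I (univ.erase j)) := by
  intro z hz
  rcases isEmpty_or_nonempty (Cell I) with _ | ⟨⟨c⟩⟩
  · simp [dot]
  have hmarg : marg I z E ∈ LL I (E.erase j) :=
    LL_mono (by simp [inter_erase]) (marg_mem_LL_inter (E := E) hz)
  have hcard : ((∏ k ∈ Eᶜ, I k : ℕ) : ℚ) ≠ 0 :=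
    Nat.cast_ne_zero.2 (prod_ne_zero_iff.2 fun k _ => (c k).pos.ne')
  have h := hperp _ hmarg
  rw [dot_marg_of_mem_LL z hx] at h
  exact (mul_eq_zero.1 h).resolve_left hcard

theorem stmt4_general (E : Finset (Fin m)) :
    NN I E = LL I E ⊓ perp I (⨆ j ∈ E, LL I (Finset.univ.erase j)) := by
  apply le_antisymm
  · intro x hx
    obtain ⟨hxE, hxperp⟩ := Submodule.mem_inf.1 hx
    rw [mem_perp_iSup₂] at hxperp
    exact Submodule.mem_inf.2
      ⟨hxE, mem_perp_iSup₂.2 fun j hj => mem_perp_LL_univ_erase hxE (hxperp j hj)⟩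
  · exact inf_le_inf_left _ <| perp_anti <|
      iSup₂_mono fun j _ => LL_mono (erase_subset_erase j (subset_univ E))

/-- Lemma 2 (1): `N_E = L_E ⊓ (Σ_{j∈E} L_{[m]∖{j}})^⊥`. -/
theorem stmt4 (hI : ∀ j, 2 ≤ I j) (E : Finset (Fin m)) :
    NN I E = LL I E ⊓ perp I (⨆ j ∈ E, LL I (Finset.univ.erase j)) :=
  stmt4_general E

end Hier
end

section
/- For E ⊂ [m], define ∂_E = ∏_{j∈E} ∂_j, the composition of the commuting partial difference operators ∂_j. Then the kernel of ∂_E equals Σ_{F ⊄⊇ E} N_F, that is, the span of all incremental subspaces N_F over subsets F of [m] that do not contain E. -/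
open Finset

namespace Hier

variable {m : ℕ}

variable (I : Fin m → ℕ)

/-!
A table killed by `∂_j ∘ ∂_{E'}` is the sum of its slice at the base level of coordinate `j`,
which lies in `L_{[m]∖j}`, and of `∂_j x`, which is killed by `∂_{E'}`; hence
`ker ∂_E = Σ_{j ∈ E} L_{[m]∖j}`. Splitting `L_G` orthogonally along `Σ_{j ∈ G} L_{G∖j}` gives
`L_G = Σ_{j ∈ G} L_{G∖j} + N_G`, so `L_G = Σ_{F ⊆ G} N_F` by induction, and
`Σ_{j ∈ E} L_{[m]∖j}` is the span of the `N_F` with `F` missing some `j ∈ E`.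
-/

section Differences

variable {I} (hI0 : ∀ j, 0 < I j)

def pd1Linear (j : Fin m) : Module.End ℚ (Cell I → ℚ) where
  toFun := pd1 I hI0 j
  map_add' x y := by funext i; simp only [pd1, Pi.add_apply]; ring
  map_smul' c x := by funext i; simp only [pd1, Pi.smul_apply, smul_eq_mul, RingHom.id_apply]; ring

lemma pd1_comm (j k : Fin m) (x : Cell I → ℚ) :
    pd1 I hI0 j (pd1 I hI0 k x) = pd1 I hI0 k (pd1 I hI0 j x) := by
  rcases eq_or_ne j k with rfl | h
  · rfl
  · funext i
    simp only [pd1, Function.update_comm h]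
    ring

-- `pdE` folds over `Finset.toList`, whose order is arbitrary; this makes the order irrelevant.
instance : LeftCommutative (fun (j : Fin m) (f : (Cell I → ℚ) → Cell I → ℚ) => pd1 I hI0 j ∘ f) :=
  ⟨fun j k f => funext fun x => pd1_comm hI0 j k (f x)⟩

lemma pdE_empty : pdE I hI0 ∅ = id := by
  simp [pdE]

lemma pdE_insert {j : Fin m} {E : Finset (Fin m)} (h : j ∉ E) :
    pdE I hI0 (insert j E) = pd1 I hI0 j ∘ pdE I hI0 E :=
  (toList_insert h).foldr_eq _

lemma pdE_pd1 (E : Finset (Fin m)) (j : Fin m) (x : Cell I → ℚ) :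
    pdE I hI0 E (pd1 I hI0 j x) = pd1 I hI0 j (pdE I hI0 E x) := by
  induction E using Finset.induction generalizing x with
  | empty => simp only [pdE_empty, id_eq]
  | insert _ _ hk ih => simp only [pdE_insert hI0 hk, Function.comp_apply, ih, pd1_comm]

lemma pdE_of_mem {j : Fin m} {E : Finset (Fin m)} (hj : j ∈ E) (x : Cell I → ℚ) :
    pdE I hI0 E x = pdE I hI0 (E.erase j) (pd1 I hI0 j x) := by
  conv_lhs => rw [← insert_erase hj]
  rw [pdE_insert hI0 (notMem_erase j E), Function.comp_apply, pdE_pd1]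

noncomputable def pdELinear (E : Finset (Fin m)) : Module.End ℚ (Cell I → ℚ) :=
  E.toList.foldr (fun j f => pd1Linear hI0 j ∘ₗ f) LinearMap.id

lemma coe_pdELinear (E : Finset (Fin m)) : ⇑(pdELinear hI0 E) = pdE I hI0 E := by
  unfold pdELinear pdE
  induction E.toList with
  | nil => rfl
  | cons j l ih => simp only [List.foldr_cons, LinearMap.coe_comp, ih]; rfl

lemma shift_mem_LL (j : Fin m) (x : Cell I → ℚ) :
    (fun i => x (Function.update i j ⟨0, hI0 j⟩)) ∈ LL I (univ.erase j) := by
  intro i i' h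
  suffices Function.update i j ⟨0, hI0 j⟩ = Function.update i' j ⟨0, hI0 j⟩ by simp only [this]
  funext k
  rcases eq_or_ne k j with rfl | hk
  · simp
  · simp only [Function.update_of_ne hk]
    exact h k (mem_erase.mpr ⟨hk, mem_univ k⟩)

lemma pd1_eq_zero_of_mem {j : Fin m} {x : Cell I → ℚ} (hx : x ∈ LL I (univ.erase j)) :
    pd1 I hI0 j x = 0 :=
  funext fun i => sub_eq_zero.mpr <| hx i _
    fun _ hk => (Function.update_of_ne (mem_erase.mp hk).1 _ _).symm

lemma pdE_eq_zero_iff (E : Finset (Fin m)) (x : Cell I → ℚ) :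
    pdE I hI0 E x = 0 ↔ x ∈ ⨆ j ∈ E, LL I (univ.erase j) := by
  constructor
  · induction E using Finset.induction generalizing x with
    | empty =>
      intro hx
      rw [pdE_empty, id_eq] at hx
      subst hx
      exact zero_mem _
    | insert j E hj ih =>
      intro hx
      rw [pdE_insert hI0 hj, Function.comp_apply, ← pdE_pd1] at hx
      have hshift : (fun i => x (Function.update i j ⟨0, hI0 j⟩))
          ∈ ⨆ k ∈ insert j E, LL I (univ.erase k) :=
        Submodule.mem_iSup_of_mem j <|
          Submodule.mem_iSup_of_mem (mem_insert_self j E) (shift_mem_LL hI0 j x)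
      have hdiff : pd1 I hI0 j x ∈ ⨆ k ∈ insert j E, LL I (univ.erase k) :=
        (biSup_mono fun _ => mem_insert_of_mem : (⨆ k ∈ E, LL I (univ.erase k)) ≤ _) (ih _ hx)
      convert add_mem hshift hdiff using 1
      funext i
      simp only [pd1, Pi.add_apply, add_sub_cancel]
  · suffices (⨆ j ∈ E, LL I (univ.erase j)) ≤ LinearMap.ker (pdELinear hI0 E) by
      intro hx
      simpa [coe_pdELinear] using this hx
    refine iSup₂_le fun j hj y hy => ?_
    rw [LinearMap.mem_ker, coe_pdELinear, pdE_of_mem hI0 hj, pd1_eq_zero_of_mem hI0 hy,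
      ← coe_pdELinear, map_zero]

end Differences

section Incremental

variable {I}

lemma perp_eq_orthogonal (S : Submodule ℚ (Cell I → ℚ)) :
    perp I S = LinearMap.BilinForm.orthogonal (dotProductBilin ℚ ℚ) S :=
  rfl

lemma isCompl_perp (S : Submodule ℚ (Cell I → ℚ)) : IsCompl S (perp I S) := by
  have hrefl : (dotProductBilin ℚ ℚ : LinearMap.BilinForm ℚ (Cell I → ℚ)).IsRefl :=
    fun x y h => by simpa [dotProduct_comm] using h
  rw [perp_eq_orthogonal, LinearMap.BilinForm.isCompl_orthogonal_iff_disjoint hrefl,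
    Submodule.disjoint_def]
  intro x hxS hxperp
  exact dotProduct_self_eq_zero.mp (hxperp x hxS)

lemma eq_sup_inf_perp {S T : Submodule ℚ (Cell I → ℚ)} (h : S ≤ T) : T = S ⊔ T ⊓ perp I S := by
  rw [inf_comm, ← sup_inf_assoc_of_le _ h, (isCompl_perp S).sup_eq_top, top_inf_eq]

lemma LL_eq_iSup_NN (G : Finset (Fin m)) : LL I G = ⨆ F ∈ G.powerset, NN I F := by
  induction G using Finset.strongInduction with
  | _ G ih =>
    refine le_antisymm ?_ (iSup₂_le fun F hF => inf_le_left.trans (LL_mono (mem_powerset.mp hF)))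
    rw [eq_sup_inf_perp (iSup₂_le fun j _ => LL_mono (erase_subset j G) : _ ≤ LL I G)]
    refine sup_le (iSup₂_le fun j hj => ?_) (le_iSup₂_of_le G (mem_powerset_self G) le_rfl)
    rw [ih _ (erase_ssubset hj)]
    exact iSup₂_le fun F hF => le_iSup₂_of_le F
      (mem_powerset.mpr ((mem_powerset.mp hF).trans (erase_subset j G))) le_rfl

lemma iSup_LL_erase_eq_iSup_NN (E : Finset (Fin m)) :
    (⨆ j ∈ E, LL I (univ.erase j)) = ⨆ (F : Finset (Fin m)) (_ : ¬ E ⊆ F), NN I F := by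
  apply le_antisymm
  · refine iSup₂_le fun j hj => ?_
    rw [LL_eq_iSup_NN]
    exact iSup₂_le fun F hF => le_iSup₂_of_le F
      (fun hEF => (mem_erase.mp (mem_powerset.mp hF (hEF hj))).1 rfl) le_rfl
  · refine iSup₂_le fun F hF => ?_
    obtain ⟨j, hjE, hjF⟩ := not_subset.mp hF
    exact le_iSup₂_of_le j hjE <| inf_le_left.trans <| LL_mono fun k hk =>
      mem_erase.mpr ⟨fun h => hjF (h ▸ hk), mem_univ k⟩

end Incremental

theorem stmt11 (hI0 : ∀ j, 0 < I j) (E : Finset (Fin m)) :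
    {x : Cell I → ℚ | pdE I hI0 E x = 0}
      = ((⨆ (F : Finset (Fin m)) (_ : ¬ E ⊆ F), NN I F : Submodule ℚ (Cell I → ℚ)) :
          Set (Cell I → ℚ)) := by
  ext x
  rw [Set.mem_ofPred_eq, pdE_eq_zero_iff, iSup_LL_erase_eq_iSup_NN]
  rfl

end Hier
end

section
/- Let Δ be a simplicial complex on [m] with facet set facet(Δ). Define fst(i) = {D ∈ facet(Δ) : i ∈ D}, the equivalence relation i ∼ j iff fst(i) = fst(j), the poset P of equivalence classes (pseudofactors) ordered by ρ ≥ ρ' iff fst(ρ) ⊇ fst(ρ'), and V(ρ) = ∪_{ρ' ≥ ρ} ρ'. Then V(ρ) = ∩_{D ∈ fst(ρ)} D, and V is an injective order-homomorphism from P into the intersection poset Q of facet(Δ) (the set of all intersections of subfamilies of facet(Δ), ordered by reverse inclusion). -/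
open Finset

namespace Hier

variable {m : ℕ}

variable (I : Fin m → ℕ)

/-- `fst_Δ(i)`: the facets of `Δ` containing the factor `i`. -/
def fstD (Δ : Finset (Finset (Fin m))) (i : Fin m) : Finset (Finset (Fin m)) :=
  (facets Δ).filter (fun D => i ∈ D)

/-- `V(ρ)` for the pseudofactor class of `i`: the union of all classes `ρ' ≥ ρ`. -/
def Vp (Δ : Finset (Finset (Fin m))) (i : Fin m) : Finset (Fin m) :=
  Finset.univ.filter (fun j => fstD Δ i ⊆ fstD Δ j)

/-- The intersection poset `Q` of `facet(Δ)`: all intersections of subfamilies of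
facets (the empty intersection being `[m]`). -/
def interPoset (Δ : Finset (Finset (Fin m))) : Finset (Finset (Fin m)) :=
  (facets Δ).powerset.image (fun S => Finset.univ.filter (fun k => ∀ D ∈ S, k ∈ D))

section Pseudofactors

variable {Δ : Finset (Finset (Fin m))} {i j : Fin m}

@[simp]
theorem mem_fstD {D : Finset (Fin m)} : D ∈ fstD Δ i ↔ D ∈ facets Δ ∧ i ∈ D :=
  mem_filter

@[simp]
theorem mem_Vp : j ∈ Vp Δ i ↔ fstD Δ i ⊆ fstD Δ j := by
  simp [Vp]

theorem mem_Vp_self : i ∈ Vp Δ i :=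
  mem_Vp.2 Subset.rfl

theorem Vp_eq_inter_fstD (Δ : Finset (Finset (Fin m))) (i : Fin m) :
    Vp Δ i = univ.filter (fun k => ∀ D ∈ fstD Δ i, k ∈ D) := by
  ext k
  simp only [mem_Vp, mem_filter, mem_univ, true_and]
  constructor
  · intro h D hD
    exact (mem_fstD.1 (h hD)).2
  · intro h D hD
    exact mem_fstD.2 ⟨(mem_fstD.1 hD).1, h D hD⟩

theorem Vp_mem_interPoset (Δ : Finset (Finset (Fin m))) (i : Fin m) :
    Vp Δ i ∈ interPoset Δ :=
  mem_image.2 ⟨fstD Δ i, mem_powerset.2 (filter_subset _ _), (Vp_eq_inter_fstD Δ i).symm⟩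

theorem Vp_subset_Vp_of_fstD_subset (h : fstD Δ i ⊆ fstD Δ j) : Vp Δ j ⊆ Vp Δ i :=
  fun _ hk => mem_Vp.2 (h.trans (mem_Vp.1 hk))

-- Each factor lies in its own `V`, so `V` determines `fst` by antisymmetry.
theorem fstD_eq_of_Vp_eq (h : Vp Δ i = Vp Δ j) : fstD Δ i = fstD Δ j :=
  Subset.antisymm (mem_Vp.1 (h ▸ mem_Vp_self)) (mem_Vp.1 (h ▸ mem_Vp_self))

end Pseudofactors

theorem stmt15_general (Δ : Finset (Finset (Fin m))) :
    (∀ i : Fin m, Vp Δ i = Finset.univ.filter (fun k => ∀ D ∈ fstD Δ i, k ∈ D)) ∧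
    (∀ i : Fin m, Vp Δ i ∈ interPoset Δ) ∧
    (∀ i i' : Fin m, fstD Δ i ⊆ fstD Δ i' → Vp Δ i' ⊆ Vp Δ i) ∧
    (∀ i i' : Fin m, fstD Δ i ≠ fstD Δ i' → Vp Δ i ≠ Vp Δ i') :=
  ⟨Vp_eq_inter_fstD Δ, Vp_mem_interPoset Δ, fun _ _ => Vp_subset_Vp_of_fstD_subset,
    fun _ _ hne heq => hne (fstD_eq_of_Vp_eq heq)⟩

/-- Lemma 3: `V(ρ) = ∩_{D ∈ fst(ρ)} D`, and `V` is an injective order-homomorphism from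
the pseudofactor poset into the intersection poset (ordered by reverse inclusion). -/
theorem stmt15 (Δ : Finset (Finset (Fin m))) (hΔ : IsComplex Δ) :
    (∀ i : Fin m, Vp Δ i = Finset.univ.filter (fun k => ∀ D ∈ fstD Δ i, k ∈ D)) ∧
    (∀ i : Fin m, Vp Δ i ∈ interPoset Δ) ∧
    (∀ i i' : Fin m, fstD Δ i ⊆ fstD Δ i' → Vp Δ i' ⊆ Vp Δ i) ∧
    (∀ i i' : Fin m, fstD Δ i ≠ fstD Δ i' → Vp Δ i ≠ Vp Δ i') :=
  stmt15_general Δ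

end Hier
end

section
/- Let A and B be subsets of [m] and g a permutation of I = I_1 × ... × I_m. If (g(i))_A depends only on i_A and (g(i))_B depends only on i_B, then (g(i))_{A∩B} depends only on i_{A∩B}, and (g(i))_{A∪B} depends only on i_{A∪B}. -/
open Finset

namespace Hier

variable {m : ℕ}

variable (I : Fin m → ℕ)

section DependsOn

variable {ι : Type*} {α : ι → Type*} {β : ι → Type*}

/-- If `x` and `y` agree on `s ∩ t`, then `s.piecewise x y` agrees with `x` on `s` and with `y`
on `t`. -/
theorem _root_.DependsOn.inter {γ : Type*} {f : (Π i, α i) → γ} {s t : Set ι}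
    (hs : DependsOn f s) (ht : DependsOn f t) : DependsOn f (s ∩ t) := by
  classical
  intro x y hxy
  calc f x = f (s.piecewise x y) := hs fun i hi => (s.piecewise_eq_of_mem x y hi).symm
    _ = f y := ht fun i hi => by
      by_cases his : i ∈ s
      · rw [s.piecewise_eq_of_mem x y his]
        exact hxy i ⟨his, hi⟩
      · exact s.piecewise_eq_of_notMem x y his

theorem _root_.forall_dependsOn_apply_iff {f : (Π i, α i) → Π j, β j} {s : Set ι} :
    (∀ x y : Π i, α i, (∀ i ∈ s, x i = y i) → ∀ j ∈ s, f x j = f y j) ↔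
      ∀ j ∈ s, DependsOn (fun x => f x j) s :=
  ⟨fun h j hj _ _ hxy => h _ _ hxy j hj, fun h _ _ hxy j hj => h j hj hxy⟩

end DependsOn

/-- Lemma 5: if `(g i)_A` depends only on `i_A` and `(g i)_B` depends only on `i_B`,
then the same holds for `A ∩ B` and `A ∪ B`. -/
theorem stmt16 (g : Equiv.Perm (Cell I)) (A B : Finset (Fin m))
    (hA : ∀ i i' : Cell I, (∀ j ∈ A, i j = i' j) → ∀ j ∈ A, g i j = g i' j)
    (hB : ∀ i i' : Cell I, (∀ j ∈ B, i j = i' j) → ∀ j ∈ B, g i j = g i' j) :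
    (∀ i i' : Cell I, (∀ j ∈ A ∩ B, i j = i' j) → ∀ j ∈ A ∩ B, g i j = g i' j) ∧
    (∀ i i' : Cell I, (∀ j ∈ A ∪ B, i j = i' j) → ∀ j ∈ A ∪ B, g i j = g i' j) := by
  have hA' := forall_dependsOn_apply_iff (s := (A : Set (Fin m))).mp hA
  have hB' := forall_dependsOn_apply_iff (s := (B : Set (Fin m))).mp hB
  constructor
  · refine forall_dependsOn_apply_iff (s := ((A ∩ B : Finset (Fin m)) : Set (Fin m))).mpr ?_
    intro j hj
    rw [coe_inter] at hj ⊢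
    exact (hA' j hj.1).inter (hB' j hj.2)
  · refine forall_dependsOn_apply_iff (s := ((A ∪ B : Finset (Fin m)) : Set (Fin m))).mpr ?_
    intro j hj
    rw [coe_union] at hj ⊢
    rcases hj with hjA | hjB
    · exact (hA' j hjA).mono Set.subset_union_left
    · exact (hB' j hjB).mono Set.subset_union_right

end Hier
end

section
/- Let P be the pseudofactor poset of a simplicial complex Δ on [m], with A(ρ) = ∪_{ρ' > ρ} ρ' and V(ρ) = ρ ∪ A(ρ). Then the generalized wreath product W = ∏_{ρ∈P} (S_{I_ρ})^{I_{A(ρ)}}, acting on I by (wi)_ρ = w_ρ(i_{A(ρ)}) i_ρ, equals the set of permutations g of I such that (g(i))_{V(ρ)} depends only on i_{V(ρ)} for every ρ ∈ P. -/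
/-! If `g` preserves agreement on every `V(ρ)`, it preserves agreement on every union of such
sets, in particular on each `A(ρ)`; being a permutation of a finite set, it permutes the agreement
classes and so also reflects agreement. The factor `w_ρ(i)` sends `x` to the `ρ`-coordinates of
`g` applied to the cell with `ρ`-coordinates from `x` and all others from `i`. It depends on `i`
only through `i_{A(ρ)}`, and it is injective: if two inputs have the same image, the `g`-images of
the two blended cells agree on `ρ` and, as the cells agree off `ρ`, on `A(ρ)`; hence on `V(ρ)`, so
the blended cells agree on `V(ρ) ⊇ ρ`. -/

open Finset

namespace Hier

variable {m : ℕ}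

variable (I : Fin m → ℕ)

/-- the ancestor set `A(ρ)` of the pseudofactor class of `j`:
the union of the classes strictly above it. -/
def Ap (Δ : Finset (Finset (Fin m))) (j : Fin m) : Finset (Fin m) :=
  Finset.univ.filter (fun k => fstD Δ j ⊂ fstD Δ k)

/-- Membership of a permutation `g` of the cells in the generalized wreath product
`∏_{ρ∈P} (S_{I_ρ})^{I_{A(ρ)}}` indexed by the pseudofactor poset `P`:
there is, for (each representative `j` of) each class `ρ`, a family `u j` of
permutations of the cells, depending only on the `A(ρ)`-coordinates of the argument,
fixing all coordinates outside `ρ` and acting on the `ρ`-coordinates through the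
`ρ`-coordinates only (i.e. a family in `(S_{I_ρ})^{I_{A(ρ)}}`), such that `g` acts by
`(g i)_ρ = w_ρ(i_{A(ρ)}) i_ρ`. -/
def InGWP (I : Fin m → ℕ) (Δ : Finset (Finset (Fin m))) (g : Equiv.Perm (Cell I)) : Prop :=
  ∃ u : Fin m → Cell I → Equiv.Perm (Cell I),
    (∀ j j' : Fin m, fstD Δ j = fstD Δ j' → u j = u j') ∧
    (∀ j : Fin m, ∀ i i' : Cell I, (∀ k ∈ Ap Δ j, i k = i' k) → u j i = u j i') ∧
    (∀ j : Fin m, ∀ i x : Cell I, ∀ k : Fin m, fstD Δ k ≠ fstD Δ j → u j i x k = x k) ∧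
    (∀ j : Fin m, ∀ i x x' : Cell I, (∀ k, fstD Δ k = fstD Δ j → x k = x' k) →
      ∀ k, fstD Δ k = fstD Δ j → u j i x k = u j i x' k) ∧
    (∀ i : Cell I, ∀ k : Fin m, g i k = u k i i k)

theorem rel_of_rel_perm_apply {α : Type*} [Finite α] {r : α → α → Prop} (hr : Equivalence r)
    (g : Equiv.Perm α) (hg : ∀ a b, r a b → r (g a) (g b)) {a b : α} (h : r (g a) (g b)) :
    r a b := by
  let s : Setoid α := ⟨r, hr⟩
  let G : Quotient s → Quotient s := Quotient.map g hg
  have hG_surjective : Function.Surjective G := by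
    refine Quotient.ind fun y => ?_
    obtain ⟨x, rfl⟩ := g.surjective y
    exact ⟨Quotient.mk s x, rfl⟩
  have hG_injective := Finite.injective_iff_surjective.mpr hG_surjective
  exact Quotient.exact <|
    hG_injective (Quotient.sound h : G (Quotient.mk s a) = G (Quotient.mk s b))

section GenWreath

variable {ι κ : Type*} {X : ι → Type*}

def AgreeOn (S : Set ι) (a b : ∀ k, X k) : Prop :=
  ∀ k ∈ S, a k = b k

theorem AgreeOn.mono {S T : Set ι} {a b : ∀ k, X k} (hST : S ⊆ T) (h : AgreeOn T a b) :
    AgreeOn S a b :=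
  fun k hk => h k (hST hk)

theorem equivalence_agreeOn (S : Set ι) : Equivalence (AgreeOn (X := X) S) :=
  ⟨fun _ _ _ => rfl, fun h k hk => (h k hk).symm, fun h h' k hk => (h k hk).trans (h' k hk)⟩

def PreservesAgreeOn (g : (∀ k, X k) → ∀ k, X k) (S : Set ι) : Prop :=
  ∀ a b, AgreeOn S a b → AgreeOn S (g a) (g b)

theorem PreservesAgreeOn.agreeOn_of_apply [Finite (∀ k, X k)] {g : Equiv.Perm (∀ k, X k)}
    {S : Set ι} (hg : PreservesAgreeOn g S) {a b : ∀ k, X k} (h : AgreeOn S (g a) (g b)) :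
    AgreeOn S a b :=
  rel_of_rel_perm_apply (equivalence_agreeOn S) g hg h

section Blend

variable [DecidableEq κ] (c : ι → κ)

def blend (ρ : κ) (i x : ∀ k, X k) : ∀ k, X k :=
  fun k => if c k = ρ then x k else i k

def wreathFactor (g : (∀ k, X k) → ∀ k, X k) (ρ : κ) (i x : ∀ k, X k) : ∀ k, X k :=
  fun k => if c k = ρ then g (blend c ρ i x) k else x k

variable {c} {g : (∀ k, X k) → ∀ k, X k}

theorem blend_self (ρ : κ) (i : ∀ k, X k) : blend c ρ i i = i := by
  funext k
  simp [blend]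

theorem wreathFactor_agreeOn_class {ρ : κ} (i : ∀ k, X k) {x x' : ∀ k, X k}
    (hxx' : AgreeOn (c ⁻¹' {ρ}) x x') :
    AgreeOn (c ⁻¹' {ρ}) (wreathFactor c g ρ i x) (wreathFactor c g ρ i x') := by
  have h_blend : blend c ρ i x = blend c ρ i x' := by
    funext k
    by_cases hk : c k = ρ
    · simp [blend, hk, hxx' k hk]
    · simp [blend, hk]
  intro k (hk : c k = ρ)
  simp [wreathFactor, hk, h_blend]

theorem wreathFactor_self_apply (i : ∀ k, X k) (k : ι) :
    wreathFactor c g (c k) i i k = g i k := by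
  simp [wreathFactor, blend_self]

end Blend

variable [PartialOrder κ] (c : ι → κ)

/-- The generalized wreath product over the poset of classes `c k`; the factor `u j` is that of
the class of `j`, written as a permutation of all cells. -/
def InGenWreath (g : Equiv.Perm (∀ k, X k)) : Prop :=
  ∃ u : ι → (∀ k, X k) → Equiv.Perm (∀ k, X k),
    (∀ j j', c j = c j' → u j = u j') ∧
    (∀ j i i', AgreeOn (c ⁻¹' Set.Ioi (c j)) i i' → u j i = u j i') ∧
    (∀ j i x k, c k ≠ c j → u j i x k = x k) ∧
    (∀ j i x x', AgreeOn (c ⁻¹' {c j}) x x' →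
      AgreeOn (c ⁻¹' {c j}) (u j i x) (u j i x')) ∧
    (∀ i k, g i k = u k i i k)

variable {c}

theorem InGenWreath.preservesAgreeOn {g : Equiv.Perm (∀ k, X k)} (hg : InGenWreath c g) (j : ι) :
    PreservesAgreeOn g (c ⁻¹' Set.Ici (c j)) := by
  obtain ⟨u, -, hu_ancestors, -, hu_class, hg_apply⟩ := hg
  intro a b hab k (hk : c j ≤ c k)
  have hu : u k a = u k b :=
    hu_ancestors k a b (hab.mono fun k' (hk' : c k < c k') => hk.trans hk'.le)
  rw [hg_apply, hg_apply, hu]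
  exact hu_class k b a b (hab.mono fun k' (hk' : c k' = c k) => hk.trans hk'.ge) k rfl

theorem preservesAgreeOn_preimage_of_isUpperSet {g : (∀ k, X k) → ∀ k, X k}
    (hg : ∀ j, PreservesAgreeOn g (c ⁻¹' Set.Ici (c j))) {U : Set κ} (hU : IsUpperSet U) :
    PreservesAgreeOn g (c ⁻¹' U) :=
  fun a b hab k hk =>
    hg k a b (hab.mono fun _ (hk' : c k ≤ _) => hU hk' hk) k (le_refl (c k))

variable {g : Equiv.Perm (∀ k, X k)}

theorem wreathFactor_injective [DecidableEq κ] [Finite (∀ k, X k)]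
    (hg : ∀ j, PreservesAgreeOn g (c ⁻¹' Set.Ici (c j))) (ρ : κ) (i : ∀ k, X k) :
    Function.Injective (wreathFactor c g ρ i) := by
  intro x x' h
  have h_off : ∀ k, c k ≠ ρ → x k = x' k := fun k hk => by
    simpa [wreathFactor, hk] using congrFun h k
  have h_class : ∀ k, c k = ρ → g (blend c ρ i x) k = g (blend c ρ i x') k := fun k hk => by
    simpa [wreathFactor, hk] using congrFun h k
  have h_ancestors : AgreeOn (c ⁻¹' Set.Ioi ρ) (g (blend c ρ i x)) (g (blend c ρ i x')) :=
    preservesAgreeOn_preimage_of_isUpperSet hg (isUpperSet_Ioi ρ) _ _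
      fun k (hk : ρ < c k) => by simp [blend, hk.ne']
  have h_up : AgreeOn (c ⁻¹' Set.Ici ρ) (g (blend c ρ i x)) (g (blend c ρ i x')) :=
    fun k (hk : ρ ≤ c k) => hk.eq_or_lt.elim (fun e => h_class k e.symm) (h_ancestors k)
  have h_blend :=
    (preservesAgreeOn_preimage_of_isUpperSet hg (isUpperSet_Ici ρ)).agreeOn_of_apply h_up
  funext k
  by_cases hk : c k = ρ
  · simpa [blend, hk] using h_blend k hk.ge
  · exact h_off k hk

theorem wreathFactor_congr_ancestors [DecidableEq κ]
    (hg : ∀ j, PreservesAgreeOn g (c ⁻¹' Set.Ici (c j))) {ρ : κ} {i i' : ∀ k, X k}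
    (hii' : AgreeOn (c ⁻¹' Set.Ioi ρ) i i') (x : ∀ k, X k) :
    wreathFactor c g ρ i x = wreathFactor c g ρ i' x := by
  have h_blend : AgreeOn (c ⁻¹' Set.Ici ρ) (blend c ρ i x) (blend c ρ i' x) := by
    intro k (hk : ρ ≤ c k)
    by_cases hk' : c k = ρ
    · simp [blend, hk']
    · simp [blend, hk', hii' k (lt_of_le_of_ne hk (Ne.symm hk'))]
  funext k
  by_cases hk : c k = ρ
  · subst hk
    simp [wreathFactor, hg k _ _ h_blend k le_rfl]
  · simp [wreathFactor, hk]

variable (c)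

theorem inGenWreath_iff [Finite (∀ k, X k)] (g : Equiv.Perm (∀ k, X k)) :
    InGenWreath c g ↔ ∀ j, PreservesAgreeOn g (c ⁻¹' Set.Ici (c j)) := by
  classical
  refine ⟨fun hg j => hg.preservesAgreeOn j, fun hg => ?_⟩
  have hbij ρ i := Finite.injective_iff_bijective.mp (wreathFactor_injective hg ρ i)
  refine ⟨fun j i => Equiv.ofBijective _ (hbij (c j) i), ?_, ?_, ?_, ?_, ?_⟩
  · intro j j' h
    simp only [h]
  · intro j i i' hii'
    ext x : 1
    exact wreathFactor_congr_ancestors hg hii' x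
  · intro j i x k hk
    simp [wreathFactor, hk]
  · intro j i x x' hxx'
    exact wreathFactor_agreeOn_class i hxx'
  · intro i k
    exact (wreathFactor_self_apply i k).symm

end GenWreath

theorem coe_Vp (Δ : Finset (Finset (Fin m))) (j : Fin m) :
    (Vp Δ j : Set (Fin m)) = fstD Δ ⁻¹' Set.Ici (fstD Δ j) := by
  ext; simp [Vp]

theorem coe_Ap (Δ : Finset (Finset (Fin m))) (j : Fin m) :
    (Ap Δ j : Set (Fin m)) = fstD Δ ⁻¹' Set.Ioi (fstD Δ j) := by
  ext; simp [Ap]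

theorem stmt17 (Δ : Finset (Finset (Fin m))) (g : Equiv.Perm (Cell I)) :
    InGWP I Δ g ↔
    (∀ j : Fin m, ∀ i i' : Cell I,
      (∀ k ∈ Vp Δ j, i k = i' k) → ∀ k ∈ Vp Δ j, g i k = g i' k) := by
  have h := inGenWreath_iff (fstD Δ) g
  simp only [InGenWreath, PreservesAgreeOn, AgreeOn, ← coe_Vp, ← coe_Ap] at h
  exact h

end Hier
end

section
/- The generalized wreath product over the pseudofactor poset P equals the direct product ∏_{ρ∈P} S_{I_ρ} (each factor acting on its own coordinates) if and only if the partial order on P is trivial, i.e. no two distinct pseudofactors are comparable. -/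
open Finset

namespace Hier

variable {m : ℕ}

variable (I : Fin m → ℕ)

/-!
If no two pseudofactors are comparable, every ancestor set `A(ρ)` is empty, so the families
`w_ρ` are constant and a wreath product element acts on each class through that class alone.
Conversely every element of the direct product lies in the wreath product: restricting it to the
coordinates of one class and fixing the rest is still injective, hence a permutation.
If `ρ_a < ρ_b`, swapping two values of `i_a` exactly when `i_b = 0` is a wreath product element,
since `b` lies in `A(ρ_a)`, but its `a`-component depends on `i_b`, which lies outside `ρ_a`.
-/

section ControlledPerm

variable {ι : Type*} [DecidableEq ι] {β : ι → Type*} {a b : ι}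

def controlledPerm (hab : a ≠ b) (σ : Equiv.Perm (β a)) (p : β b → Prop) [DecidablePred p] :
    Equiv.Perm (∀ i, β i) where
  toFun x := if p (x b) then Function.update x a (σ (x a)) else x
  invFun x := if p (x b) then Function.update x a (σ.symm (x a)) else x
  left_inv x := by by_cases hx : p (x b) <;> simp [hx, Function.update_of_ne hab.symm]
  right_inv x := by by_cases hx : p (x b) <;> simp [hx, Function.update_of_ne hab.symm]

variable (hab : a ≠ b) (σ : Equiv.Perm (β a)) (p : β b → Prop) [DecidablePred p]

theorem controlledPerm_apply_self (x : ∀ i, β i) :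
    controlledPerm hab σ p x a = if p (x b) then σ (x a) else x a := by
  by_cases hx : p (x b) <;> simp [controlledPerm, hx]

theorem controlledPerm_apply_of_ne {k : ι} (hk : k ≠ a) (x : ∀ i, β i) :
    controlledPerm hab σ p x k = x k := by
  by_cases hx : p (x b) <;> simp [controlledPerm, hx, Function.update_of_ne hk]

end ControlledPerm

/-- Membership in the direct product `∏_ρ S_{I_ρ}`. -/
def InDirectProduct (Δ : Finset (Finset (Fin m))) (g : Equiv.Perm (Cell I)) : Prop :=
  ∀ j : Fin m, ∀ i i' : Cell I, (∀ k, fstD Δ k = fstD Δ j → i k = i' k) →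
    ∀ k, fstD Δ k = fstD Δ j → g i k = g i' k

def restrictClass (Δ : Finset (Finset (Fin m))) (g : Equiv.Perm (Cell I)) (j : Fin m) :
    Cell I → Cell I :=
  fun x k => if fstD Δ k = fstD Δ j then g x k else x k

variable {I} {Δ : Finset (Finset (Fin m))}

theorem Ap_eq_empty (htriv : ∀ i j : Fin m, fstD Δ i ⊆ fstD Δ j → fstD Δ i = fstD Δ j)
    (j : Fin m) : Ap Δ j = ∅ := by
  ext k
  simpa [Ap] using fun hk => hk.ne (htriv j k hk.subset)

theorem inDirectProduct_of_inGWP (hAp : ∀ j, Ap Δ j = ∅) {g : Equiv.Perm (Cell I)}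
    (hg : InGWP I Δ g) : InDirectProduct I Δ g := by
  obtain ⟨u, -, hu_anc, -, hu_class, hgu⟩ := hg
  intro j i i' hii' k hk
  have hu : u k i = u k i' := hu_anc k i i' (by simp [hAp])
  rw [hgu, hgu, ← hu]
  exact hu_class k i i i' (fun k' hk' => hii' k' (hk'.trans hk)) k rfl

theorem restrictClass_injective {g : Equiv.Perm (Cell I)} (hg : InDirectProduct I Δ g)
    (j : Fin m) : Function.Injective (restrictClass I Δ g j) := by
  intro x x' hxx'
  have hpt (k) := congrFun hxx' k
  simp only [restrictClass] at hpt
  let c : Cell I := fun k => if fstD Δ k = fstD Δ j then x' k else x k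
  have hgc : g x = g c := by
    funext k
    by_cases hk : fstD Δ k = fstD Δ j
    · have := hpt k
      rw [if_pos hk, if_pos hk] at this
      rw [this, hg j c x' (fun k' hk' => by simp [c, hk']) k hk]
    · exact hg k x c (fun k' hk' => by simp [c, hk', hk]) k rfl
  funext k
  by_cases hk : fstD Δ k = fstD Δ j
  · simpa [c, hk] using congrFun (g.injective hgc) k
  · simpa [hk] using hpt k

theorem inGWP_of_inDirectProduct {g : Equiv.Perm (Cell I)} (hg : InDirectProduct I Δ g) :
    InGWP I Δ g := by
  let u (j : Fin m) : Equiv.Perm (Cell I) :=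
    Equiv.ofBijective _ (Finite.injective_iff_bijective.mp (restrictClass_injective hg j))
  refine ⟨fun j _ => u j, ?_, fun _ _ _ _ => rfl, ?_, ?_, ?_⟩
  · intro j j' hjj'
    ext i x k
    simp [u, restrictClass, hjj']
  · intro j i x k hk
    simp [u, restrictClass, hk]
  · intro j i x x' hxx' k hk
    simpa [u, restrictClass, hk] using hg j x x' hxx' k hk
  · intro i k
    simp [u, restrictClass]

theorem controlledPerm_inGWP {a b : Fin m} (hab : fstD Δ a ⊂ fstD Δ b)
    (σ : Equiv.Perm (Fin (I a))) (p : Fin (I b) → Prop) [DecidablePred p] :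
    InGWP I Δ (controlledPerm (fun h => hab.ne (congrArg (fstD Δ) h)) σ p) := by
  let u (j : Fin m) (i : Cell I) : Equiv.Perm (Cell I) :=
    if fstD Δ j = fstD Δ a ∧ p (i b) then Equiv.piCongrRight (Pi.mulSingle a σ) else 1
  refine ⟨u, ?_, ?_, ?_, ?_, ?_⟩
  · intro j j' hjj'
    simp only [u, hjj']
  · intro j i i' hii'
    by_cases hj : fstD Δ j = fstD Δ a
    · have hb : b ∈ Ap Δ j := by simpa [Ap, hj] using hab
      simp only [u, hj, hii' b hb]
    · simp only [u, hj, false_and, if_false]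
  · intro j i x k hk
    dsimp only [u]
    by_cases hka : k = a
    · subst hka
      split_ifs with hj
      · exact absurd hj.1.symm hk
      · rfl
    · split_ifs <;> simp [Pi.mulSingle_eq_of_ne hka]
  · intro j i x x' hxx' k hk
    dsimp only [u]
    split_ifs
    · by_cases hka : k = a
      · subst hka
        simp [hxx' k hk]
      · simp [Pi.mulSingle_eq_of_ne hka, hxx' k hk]
    · exact hxx' k hk
  · intro i k
    by_cases hka : k = a
    · subst hka
      by_cases hi : p (i b) <;> simp [u, controlledPerm_apply_self, hi]
    · rw [controlledPerm_apply_of_ne _ _ _ hka]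
      dsimp only [u]
      split_ifs <;> simp [Pi.mulSingle_eq_of_ne hka]

theorem controlledPerm_not_inDirectProduct {a b : Fin m} (hab : fstD Δ a ≠ fstD Δ b)
    (σ : Equiv.Perm (Fin (I a))) (p : Fin (I b) → Prop) [DecidablePred p] (x : Cell I)
    (hσ : σ (x a) ≠ x a) (hx : p (x b)) (v : Fin (I b)) (hv : ¬ p v) :
    ¬ InDirectProduct I Δ (controlledPerm (fun h => hab (congrArg (fstD Δ) h)) σ p) := by
  intro hg
  have hagree : ∀ k, fstD Δ k = fstD Δ a → x k = Function.update x b v k := by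
    intro k hk
    rw [Function.update_of_ne (by rintro rfl; exact hab hk.symm)]
  have := hg a x _ hagree a rfl
  rw [controlledPerm_apply_self, controlledPerm_apply_self, if_pos hx, Function.update_self,
    if_neg hv, Function.update_of_ne (fun h => hab (congrArg (fstD Δ) h))] at this
  exact hσ this

theorem exists_inGWP_not_inDirectProduct (hI : ∀ j, 2 ≤ I j) {a b : Fin m}
    (hab : fstD Δ a ⊂ fstD Δ b) : ∃ g, InGWP I Δ g ∧ ¬ InDirectProduct I Δ g := by
  let zero : Cell I := fun k => ⟨0, by have := hI k; omega⟩
  let one : Fin (I b) := ⟨1, by have := hI b; omega⟩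
  let σ : Equiv.Perm (Fin (I a)) := Equiv.swap (zero a) ⟨1, by have := hI a; omega⟩
  refine ⟨_, controlledPerm_inGWP hab σ (· = zero b),
    controlledPerm_not_inDirectProduct hab.ne σ (· = zero b) zero ?_ rfl one ?_⟩
  · simp [σ, Equiv.swap_apply_left, Fin.ext_iff, zero]
  · simp [one, zero, Fin.ext_iff]

theorem stmt19_general (hI : ∀ j, 2 ≤ I j) (Δ : Finset (Finset (Fin m))) :
    ({g : Equiv.Perm (Cell I) | InGWP I Δ g}
      = {g : Equiv.Perm (Cell I) | ∀ j : Fin m, ∀ i i' : Cell I,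
          (∀ k, fstD Δ k = fstD Δ j → i k = i' k) →
          ∀ k, fstD Δ k = fstD Δ j → g i k = g i' k})
    ↔ (∀ i j : Fin m, fstD Δ i ⊆ fstD Δ j → fstD Δ i = fstD Δ j) := by
  constructor
  · intro h
    by_contra! hcon
    obtain ⟨a, b, hsub, hne⟩ := hcon
    obtain ⟨g, hg, hg'⟩ := exists_inGWP_not_inDirectProduct hI (hsub.ssubset_of_ne hne)
    exact hg' ((Set.ext_iff.mp h g).mp hg)
  · intro htriv
    ext g
    exact ⟨inDirectProduct_of_inGWP (Ap_eq_empty htriv), inGWP_of_inDirectProduct⟩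

/-- Corollary 1: the generalized wreath product equals the direct product
`∏_ρ S_{I_ρ}` (permutations whose `ρ`-components depend only on `i_ρ`, for every class)
iff the pseudofactor poset has the trivial order. -/
theorem stmt19 (hI : ∀ j, 2 ≤ I j) (Δ : Finset (Finset (Fin m))) (hΔ : IsComplex Δ) :
    ({g : Equiv.Perm (Cell I) | InGWP I Δ g}
      = {g : Equiv.Perm (Cell I) | ∀ j : Fin m, ∀ i i' : Cell I,
          (∀ k, fstD Δ k = fstD Δ j → i k = i' k) →
          ∀ k, fstD Δ k = fstD Δ j → g i k = g i' k})
    ↔ (∀ i j : Fin m, fstD Δ i ⊆ fstD Δ j → fstD Δ i = fstD Δ j) :=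
  stmt19_general hI Δ

end Hier
end
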